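/- Let B be the integral closure of A = F_q[T] in the splitting field E of x^2 - cx + μP^m over K = F_q(T), where μ ∈ F_q^*, P ∤ c, and deg c ≤ md/2 with md ≥ 2. Then no root θ of this polynomial is a unit of B. -/

import Mathlib

/-!
A unit `θ` of the integral closure of the integrally closed ring `A = F_q[T]` has a minimal
polynomial over `A` whose constant coefficient is a unit of `A`, because that polynomial divides
the reversed minimal polynomial of `θ⁻¹`. It also divides `X² - cX + μP^m`. If the two are equal,
`μP^m` would be a unit; otherwise `θ = a` is a constant of `A`, and `μP^m = a(c - a)` has degree at
most `deg c < md`.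
-/

open Polynomial

noncomputable section

variable (Fq : Type) [Field Fq] [Fintype Fq]

set_option synthInstance.maxHeartbeats 1000000
set_option maxHeartbeats 1000000

instance (f : Polynomial (RatFunc Fq)) : Algebra (Polynomial Fq) f.SplittingField :=
  ((algebraMap (RatFunc Fq) f.SplittingField).comp
    (algebraMap (Polynomial Fq) (RatFunc Fq))).toAlgebra

section IntegrallyClosed

variable {A S : Type*} [CommRing A] [IsDomain A] [IsIntegrallyClosed A]
  [CommRing S] [IsDomain S] [Algebra A S] [Module.IsTorsionFree A S]

theorem minpoly_dvd_reverse_minpoly_of_mul_eq_one {x y : S} (hx : IsIntegral A x)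
    (hxy : x * y = 1) : minpoly A x ∣ (minpoly A y).reverse := by
  let _ : Invertible y := ⟨x, hxy, by rw [mul_comm, hxy]⟩
  refine minpoly.isIntegrallyClosed_dvd hx ?_
  rw [aeval_def, show x = ⅟y from rfl, eval₂_reverse_eq_zero_iff, ← aeval_def, minpoly.aeval]

/-- `coeff 0` is multiplicative, and `coeff 0` of the reversed minimal polynomial of `x⁻¹` is its
leading coefficient `1`. -/
theorem isUnit_coeff_zero_minpoly_of_isUnit {x : integralClosure A S} (hx : IsUnit x) :
    IsUnit ((minpoly A (x : S)).coeff 0) := by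
  obtain ⟨⟨x, y, hxy, -⟩, rfl⟩ := hx
  obtain ⟨g, hg⟩ := minpoly_dvd_reverse_minpoly_of_mul_eq_one x.2
    (congrArg Subtype.val hxy : (x : S) * y = 1)
  refine isUnit_of_dvd_one ⟨g.coeff 0, ?_⟩
  rw [← (minpoly.monic y.2).leadingCoeff, ← coeff_zero_reverse, hg, mul_coeff_zero]

theorem isUnit_or_exists_isUnit_root_of_isUnit {x : integralClosure A S} (hx : IsUnit x)
    {c u : A} (hxcu : (x : S) ^ 2 - algebraMap A S c * x + algebraMap A S u = 0) :
    IsUnit u ∨ ∃ a : A, IsUnit a ∧ a ^ 2 - c * a + u = 0 := by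
  have hint : IsIntegral A (x : S) := x.2
  have hmonic : (X ^ 2 - C c * X + C u).Monic := by monicity!
  have hdeg : (X ^ 2 - C c * X + C u).natDegree = 2 := by compute_degree!
  have hdvd : minpoly A (x : S) ∣ X ^ 2 - C c * X + C u :=
    minpoly.isIntegrallyClosed_dvd hint (by simpa [aeval_def] using hxcu)
  have hle : (minpoly A (x : S)).natDegree ≤ 2 := hdeg ▸ natDegree_le_of_dvd hdvd hmonic.ne_zero
  have hunit := isUnit_coeff_zero_minpoly_of_isUnit hx
  obtain hlin | hquad :
      (minpoly A (x : S)).natDegree = 1 ∨ (minpoly A (x : S)).natDegree = 2 := by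
    have := minpoly.natDegree_pos hint
    omega
  · right
    refine ⟨-(minpoly A (x : S)).coeff 0, hunit.neg, FaithfulSMul.algebraMap_injective A S ?_⟩
    have hroot := minpoly.aeval A (x : S)
    rw [(minpoly.monic hint).eq_X_add_C hlin, map_add, aeval_X, aeval_C] at hroot
    rw [eq_neg_of_add_eq_zero_left hroot] at hxcu
    simpa using hxcu
  · left
    have := eq_of_monic_of_dvd_of_natDegree_le (minpoly.monic hint) hmonic hdvd (by omega)
    simpa [← this] using hunit

end IntegrallyClosed

theorem Polynomial.natDegree_le_of_isUnit_of_sq_sub_mul_add_eq_zero {R : Type*} [CommRing R]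
    [IsDomain R] {a c u : R[X]} (ha : IsUnit a) (h : a ^ 2 - c * a + u = 0) :
    u.natDegree ≤ c.natDegree := by
  have ha0 : a.natDegree = 0 := natDegree_eq_zero_of_isUnit ha
  rw [show u = a * (c - a) by linear_combination h]
  calc (a * (c - a)).natDegree ≤ a.natDegree + (c - a).natDegree := natDegree_mul_le
    _ ≤ c.natDegree := by have := natDegree_sub_le c a; omega

instance (f : Polynomial (RatFunc Fq)) : Module.IsTorsionFree (Polynomial Fq) f.SplittingField :=
  Module.isTorsionFree_iff_algebraMap_injective.mpr <|
    (algebraMap (RatFunc Fq) f.SplittingField).injective.comp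
      (IsFractionRing.injective (Polynomial Fq) (RatFunc Fq))

theorem root_not_unit_of_integral_closure
    (P : Polynomial Fq) (hP : Irreducible P) (d m : ℕ) (hd : P.natDegree = d)
    (hm : 0 < m) (hmd : 2 ≤ m * d)
    (μ : Fqˣ) (c : Polynomial Fq) (hdeg : 2 * c.natDegree ≤ m * d) :
    ∀ θ : (X ^ 2 - C (algebraMap (Polynomial Fq) (RatFunc Fq) c) * X
            + C (algebraMap (Polynomial Fq) (RatFunc Fq) ((μ : Fq) • P ^ m))
            : Polynomial (RatFunc Fq)).SplittingField,
      θ ^ 2 - algebraMap (Polynomial Fq) _ c * θ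
          + algebraMap (Polynomial Fq) _ ((μ : Fq) • P ^ m) = 0 →
      ∀ hmem : θ ∈ integralClosure (Polynomial Fq) _,
        ¬ IsUnit (⟨θ, hmem⟩ : integralClosure (Polynomial Fq) _) := by
  intro θ hθ hmem hunit
  rcases isUnit_or_exists_isUnit_root_of_isUnit hunit hθ with hu | ⟨a, ha, ha_root⟩
  · have hPu : P ∣ (μ : Fq) • P ^ m := by
      rw [smul_eq_C_mul]
      exact (dvd_pow_self P hm.ne').mul_left _
    exact hP.not_isUnit (isUnit_of_dvd_unit hPu hu)
  · have hc_lt := natDegree_le_of_isUnit_of_sq_sub_mul_add_eq_zero ha ha_root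
    rw [natDegree_smul _ μ.ne_zero, natDegree_pow, hd] at hc_lt
    omega

end
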